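/- arXiv:2110.07751 — 2 statements merged into one kernel-verified Lean document; each statement's English description precedes it below -/
import Mathlib

section
/- Gradient descent with the Rand-k-Temporal estimator on the quadratic objective converges linearly to the true optimum: if 0 < η ≤ min{ 1/(1 + 8α), p/2 }, then for every t ≥ 0, E[||w^{t+1} − w*||²] ≤ (1−η)^{t+1} · ( ||w^0 − w*||² + (1/n)·Σ_{i=1}^n ||∇F_i(w*)||² ), where the expectation is over the sparsification randomness in all rounds 0,…,t. -/
open Finset

noncomputable section

/-- A size-`k` subset of the coordinate set `{1,…,d}`. -/
abbrev KSub (d k : ℕ) := {S : Finset (Fin d) // S.card = k}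

/-- Sample space: each of the `n` nodes independently picks a uniformly random
size-`k` subset of coordinates. -/
abbrev Omega (n d k : ℕ) := Fin n → KSub d k

/-- Expectation with respect to the uniform distribution on `Omega n d k`
(each `n`-tuple of `k`-subsets has probability `1 / C(d,k)^n`). -/
def Exp {n d k : ℕ} (f : Omega n d k → ℝ) : ℝ :=
  (∑ ω : Omega n d k, f ω) / (Fintype.card (Omega n d k) : ℝ)

/-- The sparsified vector of node `i`: `h_{ij} = x_{ij}` if `j ∈ S_i`, else `0`. -/
def spars {n d k : ℕ} (x : Fin n → Fin d → ℝ) (ω : Omega n d k) (i : Fin n) (j : Fin d) : ℝ :=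
  if j ∈ (ω i).1 then x i j else 0

/-- One round of gradient descent with the Rand-k-Temporal estimator on the
quadratic objective `Fᵢ(w) = ½‖w − eᵢ‖²` (so `∇Fᵢ(w) = w − eᵢ`): given the
round's random subsets `ωt` and the state `(w, b)` (global iterate and
server-side memories), produce the next state. -/
def step {n d k : ℕ} (e : Fin n → Fin d → ℝ) (η : ℝ) (ωt : Omega n d k)
    (st : (Fin d → ℝ) × (Fin n → Fin d → ℝ)) :
    (Fin d → ℝ) × (Fin n → Fin d → ℝ) :=
  (fun j => st.1 j - (η / (n : ℝ)) * ∑ i : Fin n,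
      (if j ∈ (ωt i).1 then
          st.2 i j + ((d : ℝ) / (k : ℝ)) * ((st.1 j - e i j) - st.2 i j)
        else st.2 i j),
   fun i j => if j ∈ (ωt i).1 then st.1 j - e i j else st.2 i j)

/-- The random process: `w⁰` given, `bᵢ⁰ = 0`, and each round applies `step`
with that round's fresh random subsets. `(proc e η w0 ω t).1 = wᵗ`. -/
def proc {n d k : ℕ} (e : Fin n → Fin d → ℝ) (η : ℝ) (w0 : Fin d → ℝ)
    (ω : ℕ → Omega n d k) : ℕ → (Fin d → ℝ) × (Fin n → Fin d → ℝ)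
  | 0 => (w0, fun _ _ => 0)
  | t + 1 => step e η (ω t) (proc e η w0 ω t)

/-!
Write `u = w − w*` and `a_i = b_i − ∇F_i(w*)`. Since `Σ_i ∇F_i(w) = n u`, one round reads,
coordinatewise, `w⁺ − w* = (1 − η) u − (η/n) Σ_i Z_i (∇F_i(w) − b_i)`, where the
`Z_i = (d/k)·1[j ∈ S_i] − 1` are independent across nodes, centred, of variance `d/k − 1`;
so `E‖w⁺ − w*‖² = (1 − η)²‖u‖² + η²α·(1/n)Σ_i‖∇F_i(w) − b_i‖²`, and the last sum is at most
`2‖u‖² + 2·(1/n)Σ_i‖a_i‖²`. Each memory is refreshed with probability `p`, so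
`E (1/n)Σ_i‖a_i⁺‖² = p‖u‖² + (1 − p)(1/n)Σ_i‖a_i‖²`. With `β = 4η²α/p` the step-size condition
makes `Ψ = ‖u‖² + β·(1/n)Σ_i‖a_i‖²` contract by `1 − η` in expectation; the rounds use fresh
randomness, so this iterates, and `β ≤ 1` bounds `Ψ⁰` by the right-hand side.
-/

open scoped BigOperators

section ProductExpectation

variable {ι S : Type*} [Fintype ι] [DecidableEq ι] [Fintype S]

theorem expect_pi_prod (F : ι → S → ℝ) :
    𝔼 ω : ι → S, ∏ i, F i (ω i) = ∏ i, 𝔼 s, F i s := by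
  simp only [Fintype.expect_eq_sum_div_card, ← Fintype.prod_sum, prod_div_distrib, prod_const,
    Fintype.card_pi, card_univ, Nat.cast_pow]

variable [Nonempty S]

theorem expect_pi_eval (f : S → ℝ) (i : ι) : 𝔼 ω : ι → S, f (ω i) = 𝔼 s, f s := by
  have hprod : ∀ ω : ι → S, ∏ l, (if l = i then f (ω l) else 1) = f (ω i) := by simp
  simp_rw [← hprod]
  rw [expect_pi_prod fun l s => if l = i then f s else 1,
    Fintype.prod_eq_single i fun l hl => by simp [hl]]
  simp

theorem expect_pi_eval_mul_eval (f g : S → ℝ) {i i' : ι} (h : i ≠ i') :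
    𝔼 ω : ι → S, f (ω i) * g (ω i') = (𝔼 s, f s) * 𝔼 s, g s := by
  have hprod : ∀ ω : ι → S,
      ∏ l, (if l = i then f (ω l) else if l = i' then g (ω l) else 1) = f (ω i) * g (ω i') :=
    fun ω => (Fintype.prod_eq_mul i i' h fun l hl => by simp [hl]).trans (by simp [h.symm])
  simp_rw [← hprod]
  rw [expect_pi_prod fun l s => if l = i then f s else if l = i' then g s else 1,
    Fintype.prod_eq_mul i i' h fun l hl => by simp [hl]]
  simp [h.symm]

end ProductExpectation

theorem expect_sq_add_sum_of_uncorrelated {Ω ι : Type*} [Fintype Ω] [Nonempty Ω] [Fintype ι]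
    [DecidableEq ι] (Z : ι → Ω → ℝ) (σ2 : ℝ) (hmean : ∀ i, 𝔼 ω, Z i ω = 0)
    (hcov : ∀ i i', 𝔼 ω, Z i ω * Z i' ω = if i = i' then σ2 else 0) (a : ℝ) (c : ι → ℝ) :
    𝔼 ω, (a + ∑ i, c i * Z i ω) ^ 2 = a ^ 2 + σ2 * ∑ i, c i ^ 2 := by
  have hsq : ∀ ω, (a + ∑ i, c i * Z i ω) ^ 2
      = a ^ 2 + 2 * a * ∑ i, c i * Z i ω + ∑ i, ∑ i', c i * c i' * (Z i ω * Z i' ω) := by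
    intro ω
    rw [add_sq, sq (∑ i, _), sum_mul_sum]
    congr 1
    exact sum_congr rfl fun i _ => sum_congr rfl fun i' _ => by ring
  simp only [hsq, expect_add_distrib, Fintype.expect_const, ← mul_expect, expect_sum_comm,
    hmean, hcov]
  simp [mul_ite, sum_ite_eq, mul_sum, sq, mul_comm]

section RandomIteration

variable {Ω X : Type*}

def randIter (f : Ω → X → X) (x₀ : X) : (T : ℕ) → (Fin T → Ω) → X
  | 0, _ => x₀
  | T + 1, ω => f (ω (Fin.last T)) (randIter f x₀ T (Fin.init ω))

theorem expect_randIter_le [Fintype Ω] (f : Ω → X → X) (V : X → ℝ) {c : ℝ} (hc : 0 ≤ c)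
    (hf : ∀ x, 𝔼 ω, V (f ω x) ≤ c * V x) (x₀ : X) (T : ℕ) :
    𝔼 ω : Fin T → Ω, V (randIter f x₀ T ω) ≤ c ^ T * V x₀ := by
  induction T with
  | zero => simp [randIter]
  | succ T ih =>
    calc 𝔼 ω : Fin (T + 1) → Ω, V (randIter f x₀ (T + 1) ω)
        = 𝔼 ω : Fin T → Ω, 𝔼 s, V (f s (randIter f x₀ T ω)) := by
          rw [expect_comm, ← expect_product', univ_product_univ]
          exact (Fintype.expect_equiv (Fin.snocEquiv fun _ => Ω) _ _ fun x => by
            simp [randIter, Fin.snocEquiv]).symm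
      _ ≤ 𝔼 ω : Fin T → Ω, c * V (randIter f x₀ T ω) := expect_le_expect fun ω _ => hf _
      _ = c * 𝔼 ω : Fin T → Ω, V (randIter f x₀ T ω) := (mul_expect _ _ _).symm
      _ ≤ c * (c ^ T * V x₀) := mul_le_mul_of_nonneg_left ih hc
      _ = c ^ (T + 1) * V x₀ := by ring

end RandomIteration

section RandK

variable {n d k : ℕ}

theorem KSub.nonempty (hkd : k ≤ d) : Nonempty (KSub d k) :=
  Fintype.card_pos_iff.mp <| by
    rw [Fintype.card_finset_len, Fintype.card_fin]; exact Nat.choose_pos hkd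

theorem expect_mem_ksub (hk : 1 ≤ k) (hkd : k ≤ d) (j : Fin d) :
    𝔼 S : KSub d k, (if j ∈ S.1 then 1 else 0 : ℝ) = k / d := by
  obtain ⟨d, rfl⟩ : ∃ d', d = d' + 1 := ⟨d - 1, by omega⟩
  obtain ⟨k, rfl⟩ : ∃ k', k = k' + 1 := ⟨k - 1, by omega⟩
  have hcount : ∑ S : KSub (d + 1) (k + 1), (if j ∈ S.1 then 1 else 0 : ℝ) = d.choose k := by
    rw [← sum_subtype (powersetCard (k + 1) univ) (fun _ => mem_powersetCard_univ)
      fun S => if j ∈ S then (1 : ℝ) else 0, sum_boole]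
    simpa using congrArg (Nat.cast (R := ℝ))
      (card_filter_powersetCard_subset {j} univ (k + 1) (subset_univ _) (by simp))
  have hchoose : ((d + 1 : ℕ) : ℝ) * d.choose k = (d + 1).choose (k + 1) * (k + 1 : ℕ) := by
    exact_mod_cast Nat.add_one_mul_choose_eq d k
  have hpos : (0 : ℝ) < (d + 1).choose (k + 1) := by exact_mod_cast Nat.choose_pos hkd
  rw [Fintype.expect_eq_sum_div_card, hcount, Fintype.card_finset_len, Fintype.card_fin,
    div_eq_div_iff hpos.ne' (by positivity)]
  linarith

theorem expect_ite_mem_ksub (hk : 1 ≤ k) (hkd : k ≤ d) (j : Fin d) (A B : ℝ) :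
    𝔼 S : KSub d k, (if j ∈ S.1 then A else B) = k / d * A + (1 - k / d) * B := by
  have : Nonempty (KSub d k) := KSub.nonempty hkd
  have hite : ∀ S : KSub d k,
      (if j ∈ S.1 then A else B) = B + (A - B) * if j ∈ S.1 then 1 else 0 :=
    fun S => by split_ifs <;> ring
  simp only [hite, expect_add_distrib, Fintype.expect_const, ← mul_expect, expect_mem_ksub hk hkd]
  ring

/-- The relative error `(d/k)·1[j ∈ S] − 1` of the unbiased Rand-k estimate of coordinate `j`. -/
def randKNoise (j : Fin d) (S : KSub d k) : ℝ := if j ∈ S.1 then (d : ℝ) / k - 1 else -1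

theorem expect_randKNoise (hk : 1 ≤ k) (hkd : k ≤ d) (j : Fin d) :
    𝔼 S : KSub d k, randKNoise j S = 0 := by
  have hd : (0 : ℝ) < d := by exact_mod_cast (show 0 < d by omega)
  have hk' : (0 : ℝ) < k := by exact_mod_cast hk
  simp only [randKNoise, expect_ite_mem_ksub hk hkd]
  field_simp
  ring

theorem expect_randKNoise_mul_self (hk : 1 ≤ k) (hkd : k ≤ d) (j : Fin d) :
    𝔼 S : KSub d k, randKNoise j S * randKNoise j S = d / k - 1 := by
  have hd : (0 : ℝ) < d := by exact_mod_cast (show 0 < d by omega)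
  have hk' : (0 : ℝ) < k := by exact_mod_cast hk
  have hsq : ∀ S : KSub d k,
      randKNoise j S * randKNoise j S = if j ∈ S.1 then ((d : ℝ) / k - 1) ^ 2 else 1 :=
    fun S => by unfold randKNoise; split_ifs <;> ring
  simp only [hsq, expect_ite_mem_ksub hk hkd]
  field_simp
  ring

theorem expect_randKNoise_mul_randKNoise (hk : 1 ≤ k) (hkd : k ≤ d) (j : Fin d) (i i' : Fin n) :
    𝔼 ω : Omega n d k, randKNoise j (ω i) * randKNoise j (ω i')
      = if i = i' then (d : ℝ) / k - 1 else 0 := by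
  have : Nonempty (KSub d k) := KSub.nonempty hkd
  split_ifs with h
  · rw [h, expect_pi_eval (fun S => randKNoise j S * randKNoise j S),
      expect_randKNoise_mul_self hk hkd]
  · rw [expect_pi_eval_mul_eval _ _ h, expect_randKNoise hk hkd, zero_mul]

theorem one_div_mul_div_sub_one_nonneg (hk : 1 ≤ k) (hkd : k ≤ d) :
    0 ≤ (1 / (n : ℝ)) * ((d : ℝ) / k - 1) :=
  mul_nonneg (by positivity) <| sub_nonneg.2 <|
    (one_le_div (by exact_mod_cast hk)).2 (by exact_mod_cast hkd)

end RandK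

section Step

variable {n d k : ℕ} (e : Fin n → Fin d → ℝ) (η : ℝ) (wstar : Fin d → ℝ)

theorem step_fst_sub (hn : n ≠ 0) (hws : ∀ j, ∑ i, e i j = n * wstar j) (ω : Omega n d k)
    (st : (Fin d → ℝ) × (Fin n → Fin d → ℝ)) (j : Fin d) :
    (step e η ω st).1 j - wstar j = (1 - η) * (st.1 j - wstar j)
      + ∑ i, -(η / n) * (st.1 j - e i j - st.2 i j) * randKNoise j (ω i) := by
  have hterm : ∀ i, (if j ∈ (ω i).1 then
        st.2 i j + (d : ℝ) / k * ((st.1 j - e i j) - st.2 i j) else st.2 i j)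
      = (st.1 j - e i j) + (st.1 j - e i j - st.2 i j) * randKNoise j (ω i) := fun i => by
    unfold randKNoise; split_ifs <;> ring
  have hn' : (n : ℝ) ≠ 0 := by exact_mod_cast hn
  simp only [step, hterm, sum_add_distrib, sum_sub_distrib, sum_const, card_univ,
    Fintype.card_fin, nsmul_eq_mul, hws, mul_assoc, ← mul_sum]
  field_simp
  ring

def iterateDistSq (st : (Fin d → ℝ) × (Fin n → Fin d → ℝ)) : ℝ :=
  ∑ j, (st.1 j - wstar j) ^ 2

/-- `(1/n) Σ_i ‖b_i − ∇F_i(w*)‖²`, as `∇F_i(w*) = w* − e_i`. -/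
def memoryDistSq (st : (Fin d → ℝ) × (Fin n → Fin d → ℝ)) : ℝ :=
  (1 / n) * ∑ i, ∑ j, (st.2 i j - (wstar j - e i j)) ^ 2

theorem expect_iterateDistSq_step (hn : n ≠ 0) (hk : 1 ≤ k) (hkd : k ≤ d)
    (hws : ∀ j, ∑ i, e i j = n * wstar j) (st : (Fin d → ℝ) × (Fin n → Fin d → ℝ)) :
    𝔼 ω : Omega n d k, iterateDistSq wstar (step e η ω st)
      = (1 - η) ^ 2 * iterateDistSq wstar st
        + η ^ 2 * ((1 / n) * ((d : ℝ) / k - 1))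
          * ((1 / n) * ∑ i, ∑ j, (st.1 j - e i j - st.2 i j) ^ 2) := by
  have : Nonempty (KSub d k) := KSub.nonempty hkd
  have hcoord : ∀ j, 𝔼 ω : Omega n d k, ((step e η ω st).1 j - wstar j) ^ 2
      = (1 - η) ^ 2 * (st.1 j - wstar j) ^ 2
        + η ^ 2 * ((1 / n) * ((d : ℝ) / k - 1)) * ((1 / n) * ∑ i, (st.1 j - e i j - st.2 i j) ^ 2)
      := fun j => by
    have hmean : ∀ i : Fin n, 𝔼 ω : Omega n d k, randKNoise j (ω i) = 0 :=
      fun i => (expect_pi_eval (randKNoise j) i).trans (expect_randKNoise hk hkd j)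
    simp only [step_fst_sub e η wstar hn hws]
    rw [expect_sq_add_sum_of_uncorrelated (fun i (ω : Omega n d k) => randKNoise j (ω i)) _
      hmean (expect_randKNoise_mul_randKNoise hk hkd j)]
    simp only [mul_pow, ← mul_sum]
    ring
  simp only [iterateDistSq, expect_sum_comm, hcoord, sum_add_distrib, ← mul_sum]
  rw [sum_comm]

theorem expect_memoryDistSq_step (hn : n ≠ 0) (hk : 1 ≤ k) (hkd : k ≤ d)
    (st : (Fin d → ℝ) × (Fin n → Fin d → ℝ)) :
    𝔼 ω : Omega n d k, memoryDistSq e wstar (step e η ω st)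
      = k / d * iterateDistSq wstar st + (1 - k / d) * memoryDistSq e wstar st := by
  have : Nonempty (KSub d k) := KSub.nonempty hkd
  have hn' : (n : ℝ) ≠ 0 := by exact_mod_cast hn
  have hentry : ∀ i j, 𝔼 ω : Omega n d k, ((step e η ω st).2 i j - (wstar j - e i j)) ^ 2
      = k / d * (st.1 j - wstar j) ^ 2 + (1 - k / d) * (st.2 i j - (wstar j - e i j)) ^ 2 :=
    fun i j => by
      rw [← expect_ite_mem_ksub hk hkd,
        ← expect_pi_eval (fun S : KSub d k => if j ∈ S.1 then _ else _) i]
      refine expect_congr rfl fun ω _ => ?_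
      simp only [step]; split_ifs <;> ring
  simp only [memoryDistSq, iterateDistSq, ← mul_expect, expect_sum_comm, hentry,
    sum_add_distrib, ← mul_sum, sum_const, card_univ, Fintype.card_fin, nsmul_eq_mul]
  field_simp

theorem memoryDistSq_nonneg (st : (Fin d → ℝ) × (Fin n → Fin d → ℝ)) :
    0 ≤ memoryDistSq e wstar st := by
  unfold memoryDistSq; positivity

theorem mean_sq_grad_sub_memory_le (hn : n ≠ 0) (st : (Fin d → ℝ) × (Fin n → Fin d → ℝ)) :
    (1 / n) * ∑ i, ∑ j, (st.1 j - e i j - st.2 i j) ^ 2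
      ≤ 2 * iterateDistSq wstar st + 2 * memoryDistSq e wstar st := by
  have hn' : (n : ℝ) ≠ 0 := by exact_mod_cast hn
  have hpt : ∀ i j, (st.1 j - e i j - st.2 i j) ^ 2
      ≤ 2 * (st.1 j - wstar j) ^ 2 + 2 * (st.2 i j - (wstar j - e i j)) ^ 2 := fun i j => by
    nlinarith [sq_nonneg (st.1 j - wstar j + (st.2 i j - (wstar j - e i j)))]
  calc (1 / n) * ∑ i, ∑ j, (st.1 j - e i j - st.2 i j) ^ 2
      ≤ (1 / n) * ∑ i : Fin n, ∑ j,
          (2 * (st.1 j - wstar j) ^ 2 + 2 * (st.2 i j - (wstar j - e i j)) ^ 2) := by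
        gcongr with i _ j _; exact hpt i j
    _ = 2 * iterateDistSq wstar st + 2 * memoryDistSq e wstar st := by
        simp only [iterateDistSq, memoryDistSq, sum_add_distrib, ← mul_sum, sum_const, card_univ,
          Fintype.card_fin, nsmul_eq_mul]
        field_simp

def lyapunov (β : ℝ) (st : (Fin d → ℝ) × (Fin n → Fin d → ℝ)) : ℝ :=
  iterateDistSq wstar st + β * memoryDistSq e wstar st

theorem lyapunov_init_le {β : ℝ} (hβ : β ≤ 1) (w0 : Fin d → ℝ) :
    lyapunov e wstar β (w0, fun _ _ => 0)
      ≤ ∑ j, (w0 j - wstar j) ^ 2 + (1 / n) * ∑ i, ∑ j, (wstar j - e i j) ^ 2 := by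
  have hmem : memoryDistSq e wstar ((w0, fun _ _ => 0) : (Fin d → ℝ) × (Fin n → Fin d → ℝ))
      = (1 / n) * ∑ i, ∑ j, (wstar j - e i j) ^ 2 := by
    simp only [memoryDistSq, zero_sub, neg_sq]
  rw [lyapunov, hmem]
  exact add_le_add le_rfl (mul_le_of_le_one_left (hmem ▸ memoryDistSq_nonneg e wstar _) hβ)

theorem expect_lyapunov_step_le (hn : n ≠ 0) (hk : 1 ≤ k) (hkd : k ≤ d)
    (hws : ∀ j, ∑ i, e i j = n * wstar j) {p α : ℝ} (hp : p = k / d)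
    (hα : α = (1 / n) * ((d : ℝ) / k - 1)) (hη0 : 0 < η) (hη1 : η * (1 + 8 * α) ≤ 1)
    (hη2 : 2 * η ≤ p) (st : (Fin d → ℝ) × (Fin n → Fin d → ℝ)) :
    𝔼 ω : Omega n d k, lyapunov e wstar (4 * η ^ 2 * α / p) (step e η ω st)
      ≤ (1 - η) * lyapunov e wstar (4 * η ^ 2 * α / p) st := by
  have hα0 : 0 ≤ α := hα ▸ one_div_mul_div_sub_one_nonneg hk hkd
  have hp0 : 0 < p := by linarith
  set β := 4 * η ^ 2 * α / p with hβ
  have hβ0 : 0 ≤ β := by positivity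
  have hβp : β * p = 4 * η ^ 2 * α := by rw [hβ]; field_simp
  set U := iterateDistSq wstar st
  set G := memoryDistSq e wstar st
  have hU : 0 ≤ U := sum_nonneg fun _ _ => sq_nonneg _
  have hG : 0 ≤ G := memoryDistSq_nonneg e wstar st
  have hD := mean_sq_grad_sub_memory_le e wstar hn st
  -- by `hβp` these reduce to `η (1 + 6α) ≤ 1` and `η ≤ p / 2`
  have hcoefU : (1 - η) ^ 2 + 2 * η ^ 2 * α + β * p ≤ 1 - η := by
    nlinarith [mul_nonneg hη0.le hα0]
  have hcoefG : 2 * η ^ 2 * α + β * (1 - p) ≤ (1 - η) * β := by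
    nlinarith [mul_le_mul_of_nonneg_left hη2 hβ0]
  simp only [lyapunov, expect_add_distrib, ← mul_expect,
    expect_iterateDistSq_step e η wstar hn hk hkd hws,
    expect_memoryDistSq_step e η wstar hn hk hkd, ← hp, ← hα]
  calc (1 - η) ^ 2 * U + η ^ 2 * α * ((1 / n) * ∑ i, ∑ j, (st.1 j - e i j - st.2 i j) ^ 2)
        + β * (p * U + (1 - p) * G)
      ≤ (1 - η) ^ 2 * U + η ^ 2 * α * (2 * U + 2 * G) + β * (p * U + (1 - p) * G) := by
        gcongr
    _ = ((1 - η) ^ 2 + 2 * η ^ 2 * α + β * p) * U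
          + (2 * η ^ 2 * α + β * (1 - p)) * G := by ring
    _ ≤ (1 - η) * U + (1 - η) * β * G := by gcongr
    _ = (1 - η) * (U + β * G) := by ring

end Step

theorem proc_eq_randIter {n d k : ℕ} (e : Fin n → Fin d → ℝ) (η : ℝ) (w0 : Fin d → ℝ)
    (ω : ℕ → Omega n d k) (T : ℕ) :
    proc e η w0 ω T = randIter (step e η) (w0, fun _ _ => 0) T fun m => ω m := by
  induction T with
  | zero => rfl
  | succ T ih => rw [proc, ih]; rfl

/-- linear convergence of GD with Rand-k-Temporal:
if `0 < η ≤ min{1/(1+8α), p/2}` with `p = k/d` and `α = (1/n)(d/k − 1)`, then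
for all `t`, `E[‖w^{t+1} − w*‖²] ≤ (1−η)^{t+1}(‖w⁰ − w*‖² + (1/n)Σᵢ‖∇Fᵢ(w*)‖²)`,
the expectation being over the i.i.d. sparsification randomness of rounds
`0,…,t`. -/
theorem temporal_gd_convergence (n d k : ℕ) (hn : 1 ≤ n) (hk : 1 ≤ k) (hkd : k ≤ d)
    (e : Fin n → Fin d → ℝ) (w0 : Fin d → ℝ) (η p α : ℝ)
    (hp : p = (k : ℝ) / (d : ℝ))
    (hα : α = (1 / (n : ℝ)) * ((d : ℝ) / (k : ℝ) - 1))
    (wstar : Fin d → ℝ) (hws : wstar = fun j => (1 / (n : ℝ)) * ∑ i : Fin n, e i j)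
    (hη0 : 0 < η) (hη : η ≤ min (1 / (1 + 8 * α)) (p / 2)) :
    ∀ t : ℕ,
      (∑ ω : Fin (t + 1) → Omega n d k,
          ∑ j : Fin d,
            ((proc e η w0
                (fun m => ω ⟨m % (t + 1), Nat.mod_lt m (Nat.succ_pos t)⟩)
                (t + 1)).1 j - wstar j) ^ 2)
          / (Fintype.card (Fin (t + 1) → Omega n d k) : ℝ)
        ≤ (1 - η) ^ (t + 1)
            * (∑ j : Fin d, (w0 j - wstar j) ^ 2
              + (1 / (n : ℝ)) * ∑ i : Fin n, ∑ j : Fin d, (wstar j - e i j) ^ 2) := by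
  intro t
  have hα0 : 0 ≤ α := hα ▸ one_div_mul_div_sub_one_nonneg hk hkd
  have hη1 : η * (1 + 8 * α) ≤ 1 :=
    (le_div_iff₀ (by positivity)).1 (by simpa using hη.trans (min_le_left _ _))
  have hη2 : 2 * η ≤ p := by linarith [hη.trans (min_le_right _ _)]
  have hp0 : 0 < p := by linarith
  have hβ1 : 4 * η ^ 2 * α / p ≤ 1 := by
    rw [div_le_one hp0]; nlinarith [mul_nonneg hη0.le hα0]
  have h1η : 0 ≤ 1 - η := by nlinarith [mul_nonneg hη0.le hα0]
  have hws' : ∀ j, ∑ i, e i j = n * wstar j := fun j => by rw [hws]; field_simp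
  have hsample : ∀ ω : Fin (t + 1) → Omega n d k,
      (fun m : Fin (t + 1) => ω ⟨m % (t + 1), Nat.mod_lt m (Nat.succ_pos t)⟩) = ω :=
    fun ω => funext fun m => congrArg ω (Fin.ext (Nat.mod_eq_of_lt m.2))
  calc _ = 𝔼 ω, iterateDistSq wstar (randIter (step e η) (w0, fun _ _ => 0) (t + 1) ω) := by
        simp only [Fintype.expect_eq_sum_div_card, proc_eq_randIter, hsample, iterateDistSq]
    _ ≤ 𝔼 ω, lyapunov e wstar (4 * η ^ 2 * α / p)
          (randIter (step e η) (w0, fun _ _ => 0) (t + 1) ω) :=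
        expect_le_expect fun ω _ => le_add_of_nonneg_right <|
          mul_nonneg (by positivity) (memoryDistSq_nonneg e wstar _)
    _ ≤ (1 - η) ^ (t + 1) * lyapunov e wstar (4 * η ^ 2 * α / p) (w0, fun _ _ => 0) :=
        expect_randIter_le _ _ h1η
          (expect_lyapunov_step_le e η wstar (by omega) hk hkd hws' hp hα hη0 hη1 hη2) _ _
    _ ≤ _ := mul_le_mul_of_nonneg_left (lyapunov_init_le e wstar hβ1 w0)
          (pow_nonneg h1η _)
end
end

section
/- If the data and scaling function are such that c1·R1 < c2·R2, then the corresponding member of the Rand-k-Spatial family has strictly smaller mean squared error than the standard Rand-k estimator: E[||x̂^{T} − x̄||²] < E[||x̂^{Rand-k} − x̄||²], where x̂^{Rand-k} = (1/n)·(d/k)·Σ_{i=1}^n h_i. -/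
open Finset

noncomputable section

/-- The per-coordinate sampling probability `p = k/d`. -/
def pr (d k : ℕ) : ℝ := (k : ℝ) / (d : ℝ)

/-- `M_j`: the number of nodes that send coordinate `j`. -/
def Mcount {n d k : ℕ} (ω : Omega n d k) (j : Fin d) : ℕ :=
  (Finset.univ.filter fun i : Fin n => j ∈ (ω i).1).card

/-- The normalizing constant
`β̄ = ( Σ_{m=1}^n (p/T(m))·C(n−1,m−1)·p^{m−1}·(1−p)^{n−m} )⁻¹`. -/
def betaBar (n d k : ℕ) (T : ℕ → ℝ) : ℝ :=
  (∑ m ∈ Finset.Icc 1 n,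
      (pr d k / T m) * ((n - 1).choose (m - 1) : ℝ) * pr d k ^ (m - 1)
        * (1 - pr d k) ^ (n - m))⁻¹

/-- The Rand-k-Spatial estimate of coordinate `j` of the mean:
`x̂_j = (1/n)·(β̄/T(M_j))·Σᵢ h_{ij}` when `M_j ≥ 1`, and `x̂_j = 0` when `M_j = 0`. -/
def spatialEst {n d k : ℕ} (x : Fin n → Fin d → ℝ) (T : ℕ → ℝ) (ω : Omega n d k)
    (j : Fin d) : ℝ :=
  if 1 ≤ Mcount ω j then
    (1 / (n : ℝ)) * (betaBar n d k T / T (Mcount ω j)) * ∑ i : Fin n, spars x ω i j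
  else 0

/-- The mean squared error `E[‖x̂ᵀ − x̄‖²]` of the Rand-k-Spatial estimator with
scaling function `T`. -/
def mseSpatial (n d k : ℕ) (x : Fin n → Fin d → ℝ) (T : ℕ → ℝ) : ℝ :=
  Exp (fun ω : Omega n d k =>
    ∑ j : Fin d, (spatialEst x T ω j - (1 / (n : ℝ)) * ∑ i : Fin n, x i j) ^ 2)

/-!
For a fixed coordinate `j`, the set `F` of nodes that send `j` is a random subset of the nodes
containing each node independently with probability `p = k/d`, and both estimators have the form
`(1/n)·g(|F|)·Σ_{i∈F} x_ij`, with `g = β̄/T` for Rand-k-Spatial and `g ≡ d/k` for Rand-k.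
Both are unbiased (`E[g(|F|)·1{i∈F}] = 1`), so each MSE is the quadratic form
`(1/n²)·Σ_{i,l} (E[g(|F|)²·1{i,l∈F}] - 1)·⟨x_i, x_l⟩`. The second moments are binomial sums:
for `g = β̄/T` they are `c₁ + d/k` on the diagonal and `1 - c₂` off it, for `g ≡ d/k` they are
`d/k` and `1`. Hence the difference of the two MSEs is `(c₁R₁ - c₂R₂)/n²`.
-/

theorem sum_sum_mul_sq_sum_mul {R Ω ι κ : Type*} [CommSemiring R] [Fintype Ω] [Fintype ι]
    [Fintype κ] (w : Ω → R) (a : Ω → ι → R) (x : ι → κ → R) :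
    ∑ j, ∑ ω, w ω * (∑ i, a ω i * x i j) ^ 2
      = ∑ i, ∑ l, (∑ ω, w ω * (a ω i * a ω l)) * ∑ j, x i j * x l j := by
  have hexpand : ∀ j ω, w ω * (∑ i, a ω i * x i j) ^ 2
      = ∑ i, ∑ l, w ω * (a ω i * a ω l) * (x i j * x l j) := fun j ω => by
    rw [sq, sum_mul_sum, mul_sum]
    exact sum_congr rfl fun i _ => by rw [mul_sum]; exact sum_congr rfl fun l _ => by ring
  simp only [hexpand, sum_mul, mul_sum]
  rw [sum_comm]
  simp only [sum_comm (s := (univ : Finset κ))]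
  rw [sum_comm]
  simp only [sum_comm (s := (univ : Finset Ω)) (t := (univ : Finset ι))]

theorem sum_sum_ite_eq_diag_sub_offDiag {R ι : Type*} [CommRing R] [Fintype ι] [LinearOrder ι]
    (v : ι → ι → R) (hv : ∀ i l, v i l = v l i) (c₁ c₂ : R) :
    ∑ i, ∑ l, (if i = l then c₁ else -c₂) * v i l
      = c₁ * ∑ i, v i i - c₂ * (2 * ∑ i, ∑ l, if i < l then v i l else 0) := by
  have hsplit : ∀ i l, (if i = l then c₁ else -c₂) * v i l
      = c₁ * (if i = l then v i l else 0)
        - c₂ * ((if i < l then v i l else 0) + if l < i then v i l else 0) := fun i l => by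
    rcases lt_trichotomy i l with h | rfl | h
    · simp [h.ne, h, h.not_gt]
    · simp
    · simp [h.ne', h, h.not_gt]
  have hswap : ∑ i, ∑ l, (if l < i then v i l else 0) = ∑ i, ∑ l, if i < l then v i l else 0 := by
    rw [sum_comm]
    simp_rw [hv]
  simp only [hsplit, sum_sub_distrib, sum_add_distrib, ← mul_sum, hswap, sum_ite_eq, mem_univ,
    if_true]
  ring

theorem sum_Icc_choose_mul_div_pow {K : Type*} [Field K] (a N e : ℕ) (p β : K) (T : ℕ → K) :
    ∑ m ∈ Icc a N, ((N - a).choose (m - a) : K) * p ^ m * (1 - p) ^ (N - m) * (β / T m) ^ e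
      = β ^ e * ∑ m ∈ Icc a N,
          p ^ a / T m ^ e * ((N - a).choose (m - a) : K) * p ^ (m - a) * (1 - p) ^ (N - m) := by
  rw [mul_sum]
  refine sum_congr rfl fun m hm => ?_
  rw [← Nat.add_sub_of_le (mem_Icc.1 hm).1, Nat.add_sub_cancel_left, pow_add, div_pow]
  ring

section SubsetWeight

variable {α : Type*} [Fintype α] [DecidableEq α]

/-- The law of a random subset of `α` that contains each element independently with
probability `p`. -/
def subsetWeight (p : ℝ) (F : Finset α) : ℝ :=
  p ^ #F * (1 - p) ^ (Fintype.card α - #F)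

theorem sum_ite_subset_eq_sum_powerset_compl {M : Type*} [AddCommMonoid M] (A : Finset α)
    (f : Finset α → M) :
    ∑ F, (if A ⊆ F then f F else 0) = ∑ G ∈ Aᶜ.powerset, f (A ∪ G) := by
  rw [← sum_filter, ← powerset_univ, ← Icc_eq_filter_powerset,
    Icc_eq_image_powerset (subset_univ A), ← compl_eq_univ_sdiff, sum_image]
  intro G hG H hH hGH
  simp only [coe_powerset, Set.mem_preimage, Set.mem_powerset_iff, coe_subset,
    subset_compl_iff_disjoint_left] at hG hH
  simpa [union_sdiff_left, sdiff_eq_self_of_disjoint hG.symm, sdiff_eq_self_of_disjoint hH.symm]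
    using congrArg (· \ A) hGH

theorem subsetWeight_union {p : ℝ} {A G : Finset α} (hG : G ⊆ Aᶜ) :
    subsetWeight p (A ∪ G) = p ^ #A * (p ^ #G * (1 - p) ^ (#Aᶜ - #G)) := by
  rw [subsetWeight, card_union_of_disjoint (subset_compl_iff_disjoint_left.1 hG), card_compl,
    pow_add, Nat.sub_add_eq]
  ring

theorem sum_subsetWeight_of_subset (p : ℝ) (A : Finset α) :
    ∑ F, (if A ⊆ F then subsetWeight p F else 0) = p ^ #A := by
  rw [sum_ite_subset_eq_sum_powerset_compl,
    sum_congr rfl fun G hG => subsetWeight_union (mem_powerset.1 hG), ← mul_sum,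
    sum_pow_mul_eq_add_pow, add_sub_cancel, one_pow, mul_one]

theorem sum_subsetWeight_of_subset_mul (p c : ℝ) (A : Finset α) :
    ∑ F, (if A ⊆ F then subsetWeight p F * c else 0) = p ^ #A * c := by
  simp_rw [← ite_zero_mul]
  rw [← sum_mul, sum_subsetWeight_of_subset]

theorem sum_subsetWeight (p : ℝ) : ∑ F : Finset α, subsetWeight p F = 1 := by
  simpa using sum_subsetWeight_of_subset p (∅ : Finset α)

theorem sum_subsetWeight_mul_of_subset (p : ℝ) (A : Finset α) (H : ℕ → ℝ) :
    ∑ F, (if A ⊆ F then subsetWeight p F * H #F else 0)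
      = ∑ m ∈ Icc #A (Fintype.card α), ((Fintype.card α - #A).choose (m - #A) : ℝ)
          * p ^ m * (1 - p) ^ (Fintype.card α - m) * H m := by
  have hA : #A ≤ Fintype.card α := card_le_univ A
  rw [sum_ite_subset_eq_sum_powerset_compl]
  have hunion : ∀ G ∈ Aᶜ.powerset, subsetWeight p (A ∪ G) * H #(A ∪ G)
      = p ^ #A * (p ^ #G * (1 - p) ^ (#Aᶜ - #G)) * H (#A + #G) := fun G hG => by
    rw [subsetWeight_union (mem_powerset.1 hG),
      card_union_of_disjoint (subset_compl_iff_disjoint_left.1 (mem_powerset.1 hG))]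
  rw [sum_congr rfl hunion, sum_powerset_apply_card
      (fun c => p ^ #A * (p ^ c * (1 - p) ^ (#Aᶜ - c)) * H (#A + c)),
    ← Ico_add_one_right_eq_Icc, sum_Ico_eq_sum_range, card_compl, Nat.sub_add_comm hA]
  refine sum_congr rfl fun c _ => ?_
  rw [nsmul_eq_mul, Nat.add_sub_cancel_left, pow_add, Nat.sub_add_eq]
  ring

def errorKernel (p : ℝ) (g : ℕ → ℝ) (i l : α) : ℝ :=
  ∑ F, subsetWeight p F * (((if i ∈ F then g #F else 0) - 1) * ((if l ∈ F then g #F else 0) - 1))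

theorem errorKernel_eq (p : ℝ) (g : ℕ → ℝ)
    (hg : ∀ i : α, ∑ F, (if ({i} : Finset α) ⊆ F then subsetWeight p F * g #F else 0) = 1)
    (i l : α) :
    errorKernel p g i l
      = ∑ F, (if ({i, l} : Finset α) ⊆ F then subsetWeight p F * g #F ^ 2 else 0) - 1 := by
  have hexpand : ∀ F, subsetWeight p F
      * (((if i ∈ F then g #F else 0) - 1) * ((if l ∈ F then g #F else 0) - 1))
        = (if {i, l} ⊆ F then subsetWeight p F * g #F ^ 2 else 0)
          - (if {i} ⊆ F then subsetWeight p F * g #F else 0)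
          - (if {l} ⊆ F then subsetWeight p F * g #F else 0) + subsetWeight p F := fun F => by
    simp only [insert_subset_iff, singleton_subset_iff]
    split_ifs <;> simp_all <;> ring
  rw [errorKernel, sum_congr rfl fun F _ => hexpand F, sum_add_distrib, sum_sub_distrib,
    sum_sub_distrib, hg, hg, sum_subsetWeight]
  ring

theorem errorKernel_const {p c : ℝ} (hcp : c * p = 1) (i l : α) :
    errorKernel p (fun _ => c) i l = c ^ 2 * p ^ #{i, l} - 1 := by
  rw [errorKernel_eq p _ fun i => by
      rw [sum_subsetWeight_of_subset_mul, card_singleton, pow_one, mul_comm, hcp],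
    sum_subsetWeight_of_subset_mul, mul_comm]

end SubsetWeight

section Sampling

variable {ι K : Type*} [Fintype ι] [DecidableEq ι] [Fintype K] (P : K → Prop) [DecidablePred P]

theorem card_filter_fun_eq (F : Finset ι) :
    #{ω : ι → K | ({i | P (ω i)} : Finset ι) = F}
      = #{x | P x} ^ #F * #{x | ¬P x} ^ (Fintype.card ι - #F) := by
  have e : {ω : ι → K // ({i | P (ω i)} : Finset ι) = F} ≃ ∀ i, {x : K // P x ↔ i ∈ F} :=
    (Equiv.subtypeEquivRight fun ω => by simp [Finset.ext_iff]).trans Equiv.subtypePiEquivPi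
  rw [← Fintype.card_subtype, Fintype.card_congr e, Fintype.card_pi]
  have hfactor : ∀ i, Fintype.card {x : K // P x ↔ i ∈ F}
      = if i ∈ F then #{x | P x} else #{x | ¬P x} := fun i => by
    rw [Fintype.card_subtype]
    split_ifs with hi <;> simp [hi]
  rw [prod_congr rfl fun i _ => hfactor i, prod_ite, prod_const, prod_const, filter_mem_eq_inter,
    univ_inter, filter_not (· ∈ F), filter_mem_eq_inter, univ_inter, card_univ_sdiff]

theorem sum_fun_div_card_pow [Nonempty K] (Φ : Finset ι → ℝ) :
    (∑ ω : ι → K, Φ {i | P (ω i)}) / (Fintype.card K : ℝ) ^ Fintype.card ι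
      = ∑ F, subsetWeight ((#{x | P x} : ℝ) / Fintype.card K) F * Φ F := by
  have hK : (0 : ℝ) < Fintype.card K := by exact_mod_cast Fintype.card_pos
  have hcompl : 1 - (#{x | P x} : ℝ) / Fintype.card K = #{x | ¬P x} / Fintype.card K := by
    rw [one_sub_div hK.ne', ← card_univ, ← card_filter_add_card_filter_not P]
    push_cast
    ring
  rw [← Finset.sum_fiberwise' univ (fun ω : ι → K => ({i | P (ω i)} : Finset ι)), sum_div]
  refine sum_congr rfl fun F _ => ?_
  rw [sum_const, nsmul_eq_mul, card_filter_fun_eq, subsetWeight, hcompl, div_pow, div_pow,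
    ← Nat.add_sub_of_le (card_le_univ F), pow_add, Nat.add_sub_cancel_left]
  push_cast
  field_simp

end Sampling

section Estimators

variable {n d k : ℕ}

theorem pr_pos (hk : 1 ≤ k) (hkd : k ≤ d) : 0 < pr d k :=
  div_pos (by exact_mod_cast hk) (by exact_mod_cast hk.trans hkd)

theorem pr_le_one (hkd : k ≤ d) : pr d k ≤ 1 :=
  div_le_one_of_le₀ (by exact_mod_cast hkd) (Nat.cast_nonneg _)

theorem div_mul_pr (hk : 1 ≤ k) (hkd : k ≤ d) : (d / k : ℝ) * pr d k = 1 := by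
  have : (0 : ℝ) < d := by exact_mod_cast hk.trans hkd
  have : (0 : ℝ) < k := by exact_mod_cast hk
  rw [pr]
  field_simp

theorem betaBar_mul_sum_eq_one (hn : 1 ≤ n) (hk : 1 ≤ k) (hkd : k ≤ d) {T : ℕ → ℝ}
    (hT : ∀ m ∈ Icc 1 n, 0 < T m) :
    betaBar n d k T * ∑ m ∈ Icc 1 n, (pr d k / T m) * ((n - 1).choose (m - 1) : ℝ)
      * pr d k ^ (m - 1) * (1 - pr d k) ^ (n - m) = 1 := by
  have hp := pr_pos hk hkd
  have hq : 0 ≤ 1 - pr d k := sub_nonneg.2 (pr_le_one hkd)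
  refine inv_mul_cancel₀ (ne_of_gt (sum_pos' (fun m hm => ?_) ⟨n, mem_Icc.2 ⟨hn, le_rfl⟩, ?_⟩))
  · have := hT m hm
    positivity
  · have := hT n (mem_Icc.2 ⟨hn, le_rfl⟩)
    simp only [Nat.sub_self, pow_zero, mul_one, Nat.choose_self, Nat.cast_one]
    positivity

def senders (ω : Omega n d k) (j : Fin d) : Finset (Fin n) := {i | j ∈ (ω i).1}

theorem card_KSub (d k : ℕ) : Fintype.card (KSub d k) = d.choose k := by
  have h : ({S | #S = k} : Finset (Finset (Fin d))) = powersetCard k univ := by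
    ext
    simp
  rw [Fintype.card_subtype, h, card_powersetCard, card_univ, Fintype.card_fin]

theorem card_filter_mem_KSub (hk : 1 ≤ k) (j : Fin d) :
    #{S : KSub d k | j ∈ S.1} = (d - 1).choose (k - 1) := by
  have h : #{S : KSub d k | j ∈ S.1} = #{S ∈ powersetCard k univ | {j} ⊆ S} := by
    rw [← Fintype.card_subtype, ← Fintype.card_coe]
    exact Fintype.card_congr ((Equiv.subtypeSubtypeEquivSubtypeInter _ (j ∈ ·)).trans
      (Equiv.subtypeEquivRight (by simp)))
  rw [h, card_filter_powersetCard_subset _ _ _ (subset_univ _) (by simpa using hk),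
    card_singleton, card_univ, Fintype.card_fin]

theorem card_filter_mem_KSub_div (hk : 1 ≤ k) (hkd : k ≤ d) (j : Fin d) :
    (#{S : KSub d k | j ∈ S.1} : ℝ) / Fintype.card (KSub d k) = pr d k := by
  have hd : (0 : ℝ) < d := by exact_mod_cast hk.trans hkd
  have hC : (0 : ℝ) < d.choose k := by exact_mod_cast Nat.choose_pos hkd
  have h := Nat.add_one_mul_choose_eq (d - 1) (k - 1)
  rw [Nat.sub_add_cancel (hk.trans hkd), Nat.sub_add_cancel hk] at h
  have hR : (d : ℝ) * (d - 1).choose (k - 1) = d.choose k * k := by exact_mod_cast h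
  rw [card_filter_mem_KSub hk, card_KSub, pr, div_eq_div_iff hC.ne' hd.ne']
  linarith

theorem exp_sum_senders (hk : 1 ≤ k) (hkd : k ≤ d) (Φ : Fin d → Finset (Fin n) → ℝ) :
    Exp (fun ω : Omega n d k => ∑ j, Φ j (senders ω j))
      = ∑ j, ∑ F, subsetWeight (pr d k) F * Φ j F := by
  have : Nonempty (KSub d k) := Fintype.card_pos_iff.1 (by
    rw [card_KSub]
    exact Nat.choose_pos hkd)
  rw [Exp, sum_comm, sum_div, Fintype.card_fun, Fintype.card_fin, Nat.cast_pow]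
  refine sum_congr rfl fun j _ => ?_
  rw [← card_filter_mem_KSub_div hk hkd j, ← sum_fun_div_card_pow (fun S : KSub d k => j ∈ S.1),
    Fintype.card_fin]
  rfl

/-- Rand-k is the case `g ≡ d/k`. -/
def mseScaled (n d k : ℕ) (x : Fin n → Fin d → ℝ) (g : ℕ → ℝ) : ℝ :=
  Exp (fun ω : Omega n d k => ∑ j : Fin d,
    ((1 / (n : ℝ)) * g (Mcount ω j) * ∑ i : Fin n, spars x ω i j
      - (1 / (n : ℝ)) * ∑ i : Fin n, x i j) ^ 2)

theorem mseSpatial_eq_mseScaled (x : Fin n → Fin d → ℝ) (T : ℕ → ℝ) :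
    mseSpatial n d k x T = mseScaled n d k x (fun m => betaBar n d k T / T m) := by
  have h : ∀ (ω : Omega n d k) j, spatialEst x T ω j
      = (1 / (n : ℝ)) * (betaBar n d k T / T (Mcount ω j)) * ∑ i, spars x ω i j := by
    intro ω j
    by_cases hM : 1 ≤ Mcount ω j
    · rw [spatialEst, if_pos hM]
    · have hnone : ∀ i, j ∉ (ω i).1 := by simpa [Mcount, filter_eq_empty_iff] using hM
      simp [spatialEst, hM, spars, hnone]
  simp only [mseSpatial, mseScaled, h]

theorem mseScaled_eq (hk : 1 ≤ k) (hkd : k ≤ d) (x : Fin n → Fin d → ℝ) (g : ℕ → ℝ) :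
    mseScaled n d k x g
      = (1 / (n : ℝ)) ^ 2 * ∑ i, ∑ l, errorKernel (pr d k) g i l * ∑ j, x i j * x l j := by
  have herr : ∀ (ω : Omega n d k) j,
      (1 / (n : ℝ)) * g (Mcount ω j) * ∑ i, spars x ω i j - (1 / (n : ℝ)) * ∑ i, x i j
        = 1 / (n : ℝ) * ∑ i, ((if i ∈ senders ω j then g #(senders ω j) else 0) - 1) * x i j := by
    intro ω j
    simp only [spars, senders, Mcount, mem_filter, mem_univ, true_and, mul_sum,
      ← sum_sub_distrib]
    refine sum_congr rfl fun i _ => ?_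
    split_ifs <;> ring
  simp only [mseScaled, herr, mul_pow]
  rw [exp_sum_senders hk hkd (fun j F => (1 / (n : ℝ)) ^ 2
    * (∑ i, ((if i ∈ F then g #F else 0) - 1) * x i j) ^ 2)]
  simp only [mul_left_comm _ ((1 / (n : ℝ)) ^ 2), ← mul_sum, errorKernel]
  rw [sum_sum_mul_sq_sum_mul]

theorem errorKernel_spatial_sub_randk (hn : 1 ≤ n) (hk : 1 ≤ k) (hkd : k ≤ d) {T : ℕ → ℝ}
    (hT : ∀ m ∈ Icc 1 n, 0 < T m) (i l : Fin n) :
    errorKernel (pr d k) (fun m => betaBar n d k T / T m) i l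
        - errorKernel (pr d k) (fun _ => (d / k : ℝ)) i l
      = betaBar n d k T ^ 2 * ∑ m ∈ Icc #{i, l} n, pr d k ^ #{i, l} / T m ^ 2
            * ((n - #{i, l}).choose (m - #{i, l}) : ℝ) * pr d k ^ (m - #{i, l})
            * (1 - pr d k) ^ (n - m)
        - (d / k : ℝ) ^ 2 * pr d k ^ #{i, l} := by
  have hunbiased : ∀ i : Fin n, ∑ F, (if ({i} : Finset (Fin n)) ⊆ F then
      subsetWeight (pr d k) F * (betaBar n d k T / T #F) else 0) = 1 := by
    intro i
    have h := sum_Icc_choose_mul_div_pow 1 n 1 (pr d k) (betaBar n d k T) T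
    simp only [pow_one] at h
    rw [sum_subsetWeight_mul_of_subset _ _ fun m => betaBar n d k T / T m, card_singleton,
      Fintype.card_fin, h, betaBar_mul_sum_eq_one hn hk hkd hT]
  rw [errorKernel_eq _ _ hunbiased, errorKernel_const (div_mul_pr hk hkd),
    sum_subsetWeight_mul_of_subset _ _ fun m => (betaBar n d k T / T m) ^ 2,
    Fintype.card_fin, sum_Icc_choose_mul_div_pow]
  ring

end Estimators

/-- strict improvement over Rand-k when `c₁R₁ < c₂R₂`:
if the data and the scaling function `T` satisfy `c₁·R₁ < c₂·R₂`, then the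
corresponding member of the Rand-k-Spatial family has strictly smaller MSE
than the standard Rand-k estimator `x̂ = (1/n)(d/k) Σᵢ hᵢ`. -/
theorem spatial_beats_randk (n d k : ℕ) (hn : 1 ≤ n) (hk : 1 ≤ k) (hkd : k ≤ d)
    (x : Fin n → Fin d → ℝ) (T : ℕ → ℝ) (hT : ∀ m ∈ Finset.Icc 1 n, 0 < T m)
    (R1 R2 c1 c2 : ℝ)
    (hR1 : R1 = ∑ i : Fin n, ∑ j : Fin d, x i j ^ 2)
    (hR2 : R2 = 2 * ∑ i : Fin n, ∑ l : Fin n,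
        if i < l then ∑ j : Fin d, x i j * x l j else 0)
    (hc1 : c1 = betaBar n d k T ^ 2 * (∑ m ∈ Finset.Icc 1 n,
        (pr d k / T m ^ 2) * ((n - 1).choose (m - 1) : ℝ) * pr d k ^ (m - 1)
          * (1 - pr d k) ^ (n - m)) - 1 / pr d k)
    (hc2 : c2 = 1 - betaBar n d k T ^ 2 * ∑ m ∈ Finset.Icc 2 n,
        (pr d k ^ 2 / T m ^ 2) * ((n - 2).choose (m - 2) : ℝ) * pr d k ^ (m - 2)
          * (1 - pr d k) ^ (n - m))
    (hlt : c1 * R1 < c2 * R2) :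
    mseSpatial n d k x T
      < Exp (fun ω : Omega n d k =>
          ∑ j : Fin d,
            ((1 / (n : ℝ)) * ((d : ℝ) / (k : ℝ)) * ∑ i : Fin n, spars x ω i j
              - (1 / (n : ℝ)) * ∑ i : Fin n, x i j) ^ 2) := by
  have hqp := div_mul_pr hk hkd
  have hkernel : ∀ i l : Fin n, errorKernel (pr d k) (fun m => betaBar n d k T / T m) i l
      - errorKernel (pr d k) (fun _ => (d / k : ℝ)) i l = if i = l then c1 else -c2 := by
    intro i l
    rw [errorKernel_spatial_sub_randk hn hk hkd hT]
    split_ifs with hil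
    · rw [← hil, pair_eq_singleton, card_singleton, hc1, pow_one,
        show 1 / pr d k = d / k from one_div_div _ _]
      linear_combination (-(d / k : ℝ)) * hqp
    · rw [card_pair hil, hc2]
      linear_combination (-(d / k * pr d k + 1)) * hqp
  have hdiff : mseSpatial n d k x T - mseScaled n d k x (fun _ => d / k)
      = (1 / (n : ℝ)) ^ 2 * (c1 * R1 - c2 * R2) := by
    rw [mseSpatial_eq_mseScaled, mseScaled_eq hk hkd, mseScaled_eq hk hkd, ← mul_sub]
    simp only [← sum_sub_distrib, ← sub_mul, hkernel]
    rw [sum_sum_ite_eq_diag_sub_offDiag _ fun i l => sum_congr rfl fun j _ => mul_comm _ _,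
      hR1, hR2]
    simp only [sq]
  have hn2 : 0 < (1 / (n : ℝ)) ^ 2 := by positivity
  change _ < mseScaled n d k x (fun _ => d / k)
  nlinarith
end
end
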